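/- Let A be a commutative ℂ-algebra, Ω¹ a finitely generated projective A-module, d : A → Ω¹ a ℂ-linear derivation, ∇ a connection on Ω¹, g ∈ Ω¹ ⊗_A Ω¹ a nondegenerate metric, and ∇* the adjoint connection of ∇ relative to g. Let Ω² be an A-module, ∧ : Ω¹ ⊗_A Ω¹ → Ω² a surjective A-module map, and d₁ : Ω¹ → Ω² a ℂ-linear map with d₁(fω) = df ∧ ω + f·d₁ω; set T_∇ := ∧∘∇ − d₁. Assume ∇ is torsion free, i.e. T_∇ = 0. Then ∇ is cotorsion free (T_{∇*} = 0) if and only if (∧ ⊗ id)(∇g) = 0 (weak metric compatibility), where ∇g := Σ (∇g¹) ⊗ g² + Σ g²₍₋₁₎ ⊗ g¹ ⊗ g²₍₀₎. In other words, a torsion free and cotorsion free connection is the same thing as a torsion free connection satisfying the skew metric-compatibility condition (∧ ⊗ id)(∇g) = 0. -/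

import Mathlib

/-!
Applying `∧ ⊗ id` (after reassociating) to the defining identity of the adjoint connection turns
`(∧ ⊗ id)(∇g)` into `Σ (∧∇g¹ − ∧∇*g¹) ⊗ g²`, which for torsion free `∇` is `−Σ T_{∇*}(g¹) ⊗ g²`.
The cotorsion `T_{∇*}` is `A`-linear, and an `A`-linear map `T` with `Σ T(g¹) ⊗ g² = 0` vanishes,
since nondegeneracy writes every `τ` as `Σ ψ(g²) g¹`.
-/

noncomputable section

namespace WeakRiemannian

open scoped TensorProduct

variable (A : Type) [CommRing A] [Algebra ℂ A]
variable (Ω : Type) [AddCommGroup Ω] [Module ℂ Ω] [Module A Ω] [IsScalarTower ℂ A Ω]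
variable (Ω2 : Type) [AddCommGroup Ω2] [Module ℂ Ω2] [Module A Ω2] [IsScalarTower ℂ A Ω2]

/-- `d : A → Ω¹` is a (ℂ-linear) derivation. -/
def IsDerivation (d : A →ₗ[ℂ] Ω) : Prop :=
  ∀ f g : A, d (f * g) = f • d g + g • d f

/-- A connection on `Ω¹`. -/
def IsConnection (d : A →ₗ[ℂ] Ω) (nab : Ω →ₗ[ℂ] Ω ⊗[A] Ω) : Prop :=
  ∀ (f : A) (τ : Ω), nab (f • τ) = d f ⊗ₜ[A] τ + f • nab τ

/-- `(φ ⊗ id)(g)` for `φ ∈ Hom_A(Ω¹, A)`. -/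
def contractL (φ : Ω →ₗ[A] A) : Ω ⊗[A] Ω →ₗ[A] Ω :=
  TensorProduct.lift ((LinearMap.lsmul A Ω).comp φ)

/-- `(id ⊗ φ)(g)` for `φ ∈ Hom_A(Ω¹, A)`. -/
def contractR (φ : Ω →ₗ[A] A) : Ω ⊗[A] Ω →ₗ[A] Ω :=
  TensorProduct.lift (((LinearMap.lsmul A Ω).comp φ).flip)

/-- `g ∈ Ω¹ ⊗_A Ω¹` is a nondegenerate metric. -/
def IsMetric (g : Ω ⊗[A] Ω) : Prop :=
  Function.Bijective (fun φ : Ω →ₗ[A] A => contractL A Ω φ g) ∧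
  Function.Bijective (fun φ : Ω →ₗ[A] A => contractR A Ω φ g)

/-- The defining condition of the adjoint connection:
`((∇* − ∇) ⊗ id)(g) = −∇g` on any representation `g = Σᵢ uᵢ ⊗ vᵢ`. -/
def AdjointCondition' (nabS nab : Ω →ₗ[ℂ] Ω ⊗[A] Ω) (g : Ω ⊗[A] Ω) : Prop :=
  ∀ (n : ℕ) (u v : Fin n → Ω), g = ∑ i, u i ⊗ₜ[A] v i →
    (∑ i, TensorProduct.assoc A Ω Ω Ω ((nabS (u i) - nab (u i)) ⊗ₜ[A] v i)) =
      -((∑ i, TensorProduct.assoc A Ω Ω Ω (nab (u i) ⊗ₜ[A] v i)) +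
        (∑ i, LinearMap.lTensor Ω (TensorProduct.mk A Ω Ω (u i)) (nab (v i))))

/-- `x ⊗ y ↦ (x ∧ τ) ⊗ y : Ω¹ ⊗_A Ω¹ → Ω² ⊗_A Ω¹`. -/
def wedgeMid (wedge : Ω ⊗[A] Ω →ₗ[A] Ω2) (τ : Ω) :
    Ω ⊗[A] Ω →ₗ[A] Ω2 ⊗[A] Ω :=
  LinearMap.rTensor Ω (wedge ∘ₗ ((TensorProduct.mk A Ω Ω).flip τ))

end WeakRiemannian

namespace WeakRiemannian

open scoped TensorProduct

section

variable {A Ω Ω2 : Type} [CommRing A] [AddCommGroup Ω] [Module A Ω] [AddCommGroup Ω2] [Module A Ω2]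

theorem eq_zero_of_rTensor_apply_eq_zero {g : Ω ⊗[A] Ω}
    (hg : Function.Surjective fun φ : Ω →ₗ[A] A => contractR A Ω φ g)
    {T : Ω →ₗ[A] Ω2} (hT : LinearMap.rTensor Ω T g = 0) : T = 0 := by
  have contract_comm : ∀ ψ : Ω →ₗ[A] A,
      T ∘ₗ contractR A Ω ψ =
        (TensorProduct.rid A Ω2).toLinearMap ∘ₗ LinearMap.lTensor Ω2 ψ ∘ₗ LinearMap.rTensor Ω T :=
    fun ψ => TensorProduct.ext' fun x y => by simp [contractR]
  ext τ
  obtain ⟨ψ, rfl⟩ := hg τ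
  calc T (contractR A Ω ψ g)
      = TensorProduct.rid A Ω2 (LinearMap.lTensor Ω2 ψ (LinearMap.rTensor Ω T g)) :=
        LinearMap.congr_fun (contract_comm ψ) g
    _ = 0 := by rw [hT, map_zero, map_zero]

theorem rTensor_assoc_symm_lTensor_mk (wedge : Ω ⊗[A] Ω →ₗ[A] Ω2) (x : Ω) (t : Ω ⊗[A] Ω) :
    LinearMap.rTensor Ω wedge
        ((TensorProduct.assoc A Ω Ω Ω).symm (LinearMap.lTensor Ω (TensorProduct.mk A Ω Ω x) t)) =
      wedgeMid A Ω Ω2 wedge x t := by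
  induction t using TensorProduct.induction_on with
  | zero => simp
  | tmul p q => simp [wedgeMid]
  | add a b ha hb => simp only [map_add, ha, hb]

variable [Algebra ℂ A] [Module ℂ Ω] [IsScalarTower ℂ A Ω]

theorem sum_wedge_adjoint_tmul_add_sum_wedgeMid_eq_zero {nabS nab : Ω →ₗ[ℂ] Ω ⊗[A] Ω}
    {g : Ω ⊗[A] Ω} (hadj : AdjointCondition' A Ω nabS nab g) (wedge : Ω ⊗[A] Ω →ₗ[A] Ω2)
    {n : ℕ} {u v : Fin n → Ω} (hrep : g = ∑ i, u i ⊗ₜ[A] v i) :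
    (∑ i, wedge (nabS (u i)) ⊗ₜ[A] v i) + (∑ i, wedgeMid A Ω Ω2 wedge (u i) (nab (v i))) = 0 := by
  have h := congrArg (fun t => LinearMap.rTensor Ω wedge ((TensorProduct.assoc A Ω Ω Ω).symm t))
    (hadj n u v hrep)
  simp only [map_sum, map_neg, map_add, LinearEquiv.symm_apply_apply, LinearMap.rTensor_tmul,
    rTensor_assoc_symm_lTensor_mk, map_sub, TensorProduct.sub_tmul, Finset.sum_sub_distrib] at h
  linear_combination (norm := abel) h

variable [Module ℂ Ω2]

/-- `∧ ∘ ∇ − d₁` is `A`-linear: the `df ⊗ τ` term of `∇(fτ)` cancels that of `d₁(fτ)`. -/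
def torsion {d : A →ₗ[ℂ] Ω} {nab : Ω →ₗ[ℂ] Ω ⊗[A] Ω} (hnab : IsConnection A Ω d nab)
    (wedge : Ω ⊗[A] Ω →ₗ[A] Ω2) {d1 : Ω →ₗ[ℂ] Ω2}
    (hd1 : ∀ (f : A) (ω : Ω), d1 (f • ω) = wedge (d f ⊗ₜ[A] ω) + f • d1 ω) :
    Ω →ₗ[A] Ω2 where
  toFun τ := wedge (nab τ) - d1 τ
  map_add' x y := by
    simp only [map_add]
    abel
  map_smul' f τ := by
    simp only [hnab f τ, hd1 f τ, map_add, map_smul, RingHom.id_apply, smul_sub]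
    abel

@[simp]
theorem torsion_apply {d : A →ₗ[ℂ] Ω} {nab : Ω →ₗ[ℂ] Ω ⊗[A] Ω} (hnab : IsConnection A Ω d nab)
    (wedge : Ω ⊗[A] Ω →ₗ[A] Ω2) {d1 : Ω →ₗ[ℂ] Ω2}
    (hd1 : ∀ (f : A) (ω : Ω), d1 (f • ω) = wedge (d f ⊗ₜ[A] ω) + f • d1 ω) (τ : Ω) :
    torsion hnab wedge hd1 τ = wedge (nab τ) - d1 τ :=
  rfl

theorem weakCompatibility_eq_neg_rTensor_torsion {d : A →ₗ[ℂ] Ω} {nab nabS : Ω →ₗ[ℂ] Ω ⊗[A] Ω}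
    {g : Ω ⊗[A] Ω} (hnabS : IsConnection A Ω d nabS) (hadj : AdjointCondition' A Ω nabS nab g)
    (wedge : Ω ⊗[A] Ω →ₗ[A] Ω2) {d1 : Ω →ₗ[ℂ] Ω2}
    (hd1 : ∀ (f : A) (ω : Ω), d1 (f • ω) = wedge (d f ⊗ₜ[A] ω) + f • d1 ω)
    (htorsionfree : ∀ τ : Ω, wedge (nab τ) = d1 τ)
    {n : ℕ} {u v : Fin n → Ω} (hrep : g = ∑ i, u i ⊗ₜ[A] v i) :
    (∑ i, wedge (nab (u i)) ⊗ₜ[A] v i) + (∑ i, wedgeMid A Ω Ω2 wedge (u i) (nab (v i))) =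
      -LinearMap.rTensor Ω (torsion hnabS wedge hd1) g := by
  have h := sum_wedge_adjoint_tmul_add_sum_wedgeMid_eq_zero hadj wedge hrep
  simp only [hrep, map_sum, LinearMap.rTensor_tmul, torsion_apply, ← htorsionfree,
    TensorProduct.sub_tmul, Finset.sum_sub_distrib]
  rw [eq_neg_iff_add_eq_zero, ← h]
  abel

end

variable (A : Type) [CommRing A] [Algebra ℂ A]
variable (Ω : Type) [AddCommGroup Ω] [Module ℂ Ω] [Module A Ω] [IsScalarTower ℂ A Ω]
variable (Ω2 : Type) [AddCommGroup Ω2] [Module ℂ Ω2] [Module A Ω2] [IsScalarTower ℂ A Ω2]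

theorem cotorsion_free_iff_weak_metric_compatible
    (d : A →ₗ[ℂ] Ω)
    (nab : Ω →ₗ[ℂ] Ω ⊗[A] Ω)
    (g : Ω ⊗[A] Ω) (hg : IsMetric A Ω g)
    (nabS : Ω →ₗ[ℂ] Ω ⊗[A] Ω) (hnabS : IsConnection A Ω d nabS)
    (hadj : AdjointCondition' A Ω nabS nab g)
    (wedge : Ω ⊗[A] Ω →ₗ[A] Ω2)
    (d1 : Ω →ₗ[ℂ] Ω2)
    (hd1 : ∀ (f : A) (ω : Ω), d1 (f • ω) = wedge (d f ⊗ₜ[A] ω) + f • d1 ω)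
    (htorsionfree : ∀ τ : Ω, wedge (nab τ) = d1 τ) :
    (∀ τ : Ω, wedge (nabS τ) = d1 τ) ↔
      (∀ (n : ℕ) (u v : Fin n → Ω), g = ∑ i, u i ⊗ₜ[A] v i →
        (∑ i, wedge (nab (u i)) ⊗ₜ[A] v i) +
          (∑ i, wedgeMid A Ω Ω2 wedge (u i) (nab (v i))) = 0) := by
  have cotorsion_free_iff : (∀ τ : Ω, wedge (nabS τ) = d1 τ) ↔ torsion hnabS wedge hd1 = 0 := by
    simp [LinearMap.ext_iff, sub_eq_zero]
  have weak_compat_eq {n} {u v : Fin n → Ω} (hrep : g = ∑ i, u i ⊗ₜ[A] v i) :=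
    weakCompatibility_eq_neg_rTensor_torsion hnabS hadj wedge hd1 htorsionfree hrep
  rw [cotorsion_free_iff]
  constructor
  · intro hT n u v hrep
    simp [weak_compat_eq hrep, hT]
  · intro hweak
    obtain ⟨n, u, v, hrep⟩ := TensorProduct.exists_sum_tmul_eq g
    refine eq_zero_of_rTensor_apply_eq_zero hg.2.2 (neg_eq_zero.mp ?_)
    rw [← weak_compat_eq hrep, hweak n u v hrep]

end WeakRiemannian
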